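/- arXiv:1910.12715 — 2 statements merged into one kernel-verified Lean document; each statement's English description precedes it below -/
import Mathlib

section
/- Let d ≥ 3 be an integer and define p_k = ((d-1)/((d-2)k+2d-1)) · ∏_{j=0}^{k-1} ((d-2)j + d)/((d-2)j + 2d-1) for k ≥ 0. Then p_k = (1 + 1/(d-2)) · Γ(k + d/(d-2)) Γ((2d-1)/(d-2)) / (Γ(k + 1 + (2d-1)/(d-2)) Γ(d/(d-2))), and consequently p_k is asymptotically of order k^{-(2d-3)/(d-2)}. -/
/-!
Writing `a = d/(d-2)` and `b = (2d-1)/(d-2)`, the factors of `p_k` are `(j+a)/(j+b)` and the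
prefactor is `(1 + 1/(d-2))/(k+b)`, so the Gamma identity is `Γ(x+1) = x Γ(x)` telescoped.
For the order of magnitude, Bernoulli's inequality `1 + s t ≤ (1+t)^s` (`s ≥ 1`) squeezes each
factor `(j+a)/(j+b)` between `((j+a)/(j+a+1))^(b-a)` and `((j+b-1)/(j+b))^(b-a)`; both bounds
telescope, so the product lies between two multiples of `k^(a-b)`.
-/

open Finset Real

lemma Gamma_nat_add_eq_mul_prod {a : ℝ} (ha : 0 < a) (k : ℕ) :
    Gamma (k + a) = Gamma a * ∏ j ∈ range k, ((j : ℝ) + a) := by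
  induction k with
  | zero => simp
  | succ k ih =>
    rw [prod_range_succ, ← mul_assoc, ← ih, Nat.cast_succ, add_right_comm,
      Gamma_add_one (by positivity)]
    ring

lemma prod_range_div_eq_Gamma {a b : ℝ} (ha : 0 < a) (hb : 0 < b) (k : ℕ) :
    ∏ j ∈ range k, ((j : ℝ) + a) / (j + b)
      = Gamma (k + a) * Gamma b / (Gamma (k + b) * Gamma a) := by
  have hΓa := (Gamma_pos_of_pos ha).ne'
  have hΓb := (Gamma_pos_of_pos hb).ne'
  have hprod : ∏ j ∈ range k, ((j : ℝ) + b) ≠ 0 :=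
    prod_ne_zero_iff.2 fun j _ => by positivity
  rw [prod_div_distrib, Gamma_nat_add_eq_mul_prod ha, Gamma_nat_add_eq_mul_prod hb]
  field_simp

lemma div_add_mul_prod_eq_Gamma {a b : ℝ} (ha : 0 < a) (hb : 0 < b) (c : ℝ) (k : ℕ) :
    c / (k + b) * ∏ j ∈ range k, ((j : ℝ) + a) / (j + b)
      = c * Gamma (k + a) * Gamma b / (Gamma (k + 1 + b) * Gamma a) := by
  have hkb : (k : ℝ) + b ≠ 0 := by positivity
  have hΓa := (Gamma_pos_of_pos ha).ne'
  have hΓkb := (Gamma_pos_of_pos (show 0 < (k : ℝ) + b by positivity)).ne'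
  rw [prod_range_div_eq_Gamma ha hb, add_right_comm, Gamma_add_one hkb]
  field_simp

lemma prod_range_div_add_one {a : ℝ} (ha : 0 < a) (k : ℕ) :
    ∏ j ∈ range k, ((j : ℝ) + a) / (j + a + 1) = a / (k + a) := by
  induction k with
  | zero => simp [ha.ne']
  | succ k ih =>
    have : (k : ℝ) + a ≠ 0 := by positivity
    rw [prod_range_succ, ih, Nat.cast_succ]
    field_simp
    ring

lemma div_add_one_rpow_le_div_add {x s : ℝ} (hx : 0 < x) (hs : 1 ≤ s) :
    (x / (x + 1)) ^ s ≤ x / (x + s) := by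
  have bernoulli := one_add_mul_self_le_rpow_one_add (by linarith [one_div_pos.2 hx] :
    -1 ≤ 1 / x) hs
  calc (x / (x + 1)) ^ s = ((1 + 1 / x) ^ s)⁻¹ := by
        rw [← inv_rpow (by positivity)]
        field_simp
    _ ≤ (1 + s * (1 / x))⁻¹ := inv_anti₀ (by positivity) bernoulli
    _ = x / (x + s) := by field_simp

lemma div_add_le_sub_one_div_rpow {x s : ℝ} (hx : 0 < x) (hs : 1 ≤ s) :
    x / (x + s) ≤ ((x + s - 1) / (x + s)) ^ s := by
  have hxs : 0 < x + s := by linarith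
  have bernoulli := one_add_mul_self_le_rpow_one_add
    (by rw [neg_le_neg_iff, div_le_one hxs]; linarith : -1 ≤ -(1 / (x + s))) hs
  calc x / (x + s) = 1 + s * -(1 / (x + s)) := by field_simp; ring
    _ ≤ (1 + -(1 / (x + s))) ^ s := bernoulli
    _ = ((x + s - 1) / (x + s)) ^ s := by congr 1; field_simp; ring

section ProductBounds

variable {a b : ℝ}

lemma div_add_rpow_le_prod (ha : 0 < a) (hab : a + 1 ≤ b) (k : ℕ) :
    (a / (k + a)) ^ (b - a) ≤ ∏ j ∈ range k, ((j : ℝ) + a) / (j + b) := by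
  rw [← prod_range_div_add_one ha, ← finsetProd_rpow _ _ fun j _ => by positivity]
  have hb : 0 < b := by linarith
  refine prod_le_prod (fun j _ => by positivity) fun j _ => ?_
  simpa only [add_add_sub_cancel] using
    div_add_one_rpow_le_div_add (x := j + a) (by positivity) (by linarith : 1 ≤ b - a)

lemma prod_le_div_add_rpow (ha : 0 < a) (hab : a + 1 ≤ b) (k : ℕ) :
    ∏ j ∈ range k, ((j : ℝ) + a) / (j + b) ≤ ((b - 1) / (k + b - 1)) ^ (b - a) := by
  have hb : 0 < b - 1 := by linarith
  have htel := prod_range_div_add_one hb k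
  simp only [sub_add_cancel, ← add_sub_assoc] at htel
  rw [← htel, ← finsetProd_rpow _ _ fun j _ => ?_]
  · refine prod_le_prod (fun j _ => div_nonneg (by positivity) (by linarith)) fun j _ => ?_
    simpa only [add_add_sub_cancel] using
      div_add_le_sub_one_div_rpow (x := j + a) (by positivity) (by linarith : 1 ≤ b - a)
  · have : (0 : ℝ) ≤ j := j.cast_nonneg
    exact div_nonneg (by linarith) (by linarith)

end ProductBounds

def IsOfOrderRpow (f : ℕ → ℝ) (r : ℝ) : Prop :=
  ∃ c₁ c₂ : ℝ, 0 < c₁ ∧ 0 < c₂ ∧ ∀ k : ℕ, 1 ≤ k →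
    c₁ * (k : ℝ) ^ r ≤ f k ∧ f k ≤ c₂ * (k : ℝ) ^ r

lemma IsOfOrderRpow.mul {f g : ℕ → ℝ} {r r' : ℝ} (hf : IsOfOrderRpow f r)
    (hg : IsOfOrderRpow g r') : IsOfOrderRpow (fun k => f k * g k) (r + r') := by
  obtain ⟨c₁, c₂, hc₁, hc₂, hfk⟩ := hf
  obtain ⟨c₁', c₂', hc₁', hc₂', hgk⟩ := hg
  refine ⟨c₁ * c₁', c₂ * c₂', by positivity, by positivity, fun k hk => ?_⟩
  have hk0 : (0 : ℝ) < k := by exact_mod_cast hk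
  obtain ⟨hf₁, hf₂⟩ := hfk k hk
  obtain ⟨hg₁, hg₂⟩ := hgk k hk
  have hkr : 0 < (k : ℝ) ^ r := rpow_pos_of_pos hk0 r
  have hkr' : 0 < (k : ℝ) ^ r' := rpow_pos_of_pos hk0 r'
  rw [rpow_add hk0, mul_mul_mul_comm, mul_mul_mul_comm c₂]
  exact ⟨mul_le_mul hf₁ hg₁ (by positivity) (by linarith [mul_pos hc₁ hkr]),
    mul_le_mul hf₂ hg₂ (by linarith [mul_pos hc₁' hkr']) (by positivity)⟩

lemma isOfOrderRpow_div_add {c b : ℝ} (hc : 0 < c) (hb : 0 ≤ b) :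
    IsOfOrderRpow (fun k => c / (k + b)) (-1) := by
  refine ⟨c / (1 + b), c, by positivity, hc, fun k hk => ?_⟩
  have hk1 : (1 : ℝ) ≤ k := by exact_mod_cast hk
  simp only [rpow_neg_one, ← div_eq_mul_inv, div_div]
  exact ⟨div_le_div_of_nonneg_left hc.le (by positivity) (by nlinarith),
    div_le_div_of_nonneg_left hc.le (by positivity) (by linarith)⟩

lemma isOfOrderRpow_prod {a b : ℝ} (ha : 0 < a) (hab : a + 1 ≤ b) :
    IsOfOrderRpow (fun k => ∏ j ∈ range k, ((j : ℝ) + a) / (j + b)) (a - b) := by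
  have hs : 0 ≤ b - a := by linarith
  refine ⟨(a / (1 + a)) ^ (b - a), (b - 1) ^ (b - a), by positivity,
    rpow_pos_of_pos (by linarith) _, fun k hk => ?_⟩
  have hk1 : (1 : ℝ) ≤ k := by exact_mod_cast hk
  have hk0 : (0 : ℝ) < k := by linarith
  have hpow : ∀ x : ℝ, 0 ≤ x → x ^ (b - a) * (k : ℝ) ^ (a - b) = (x / k) ^ (b - a) := by
    intro x hx
    rw [show a - b = -(b - a) by ring, rpow_neg hk0.le, ← div_eq_mul_inv,
      div_rpow hx hk0.le]
  rw [hpow _ (by positivity), hpow _ (by linarith)]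
  constructor
  · refine le_trans (rpow_le_rpow (by positivity) ?_ hs) (div_add_rpow_le_prod ha hab k)
    rw [div_div]
    exact div_le_div_of_nonneg_left ha.le (by positivity) (by nlinarith)
  · refine le_trans (prod_le_div_add_rpow ha hab k)
      (rpow_le_rpow (div_nonneg (by linarith) (by linarith)) ?_ hs)
    exact div_le_div_of_nonneg_left (by linarith) hk0 (by linarith)

/-- In Model **B** (Random Apollonian Network) with constant fitness in dimension `d ≥ 3`,
the limiting degree distribution
`p_k = ((d-1)/((d-2)k+2d-1)) ∏_{j<k} ((d-2)j+d)/((d-2)j+2d-1)` satisfies the Gamma-function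
identity and is of order `k^{-(2d-3)/(d-2)}`. -/
theorem modelB_constant_fitness (d : ℕ) (hd : 3 ≤ d) :
    (∀ k : ℕ,
      (((d : ℝ) - 1) / (((d : ℝ) - 2) * k + 2 * d - 1)) *
        ∏ j ∈ Finset.range k, (((d : ℝ) - 2) * j + d) / (((d : ℝ) - 2) * j + 2 * d - 1)
      = (1 + 1 / ((d : ℝ) - 2)) *
          Real.Gamma ((k : ℝ) + d / ((d : ℝ) - 2)) *
          Real.Gamma ((2 * (d : ℝ) - 1) / ((d : ℝ) - 2)) /
          (Real.Gamma ((k : ℝ) + 1 + (2 * (d : ℝ) - 1) / ((d : ℝ) - 2)) *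
            Real.Gamma (d / ((d : ℝ) - 2)))) ∧
    ∃ c₁ c₂ : ℝ, 0 < c₁ ∧ 0 < c₂ ∧ ∀ k : ℕ, 1 ≤ k →
      c₁ * (k : ℝ) ^ (-(2 * (d : ℝ) - 3) / ((d : ℝ) - 2)) ≤
        (((d : ℝ) - 1) / (((d : ℝ) - 2) * k + 2 * d - 1)) *
          ∏ j ∈ Finset.range k, (((d : ℝ) - 2) * j + d) / (((d : ℝ) - 2) * j + 2 * d - 1) ∧
      (((d : ℝ) - 1) / (((d : ℝ) - 2) * k + 2 * d - 1)) *
          ∏ j ∈ Finset.range k, (((d : ℝ) - 2) * j + d) / (((d : ℝ) - 2) * j + 2 * d - 1) ≤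
        c₂ * (k : ℝ) ^ (-(2 * (d : ℝ) - 3) / ((d : ℝ) - 2)) := by
  have hd2 : (0 : ℝ) < d - 2 := by
    have : (3 : ℝ) ≤ d := by exact_mod_cast hd
    linarith
  set a := (d : ℝ) / (d - 2) with ha_def
  set b := (2 * (d : ℝ) - 1) / (d - 2) with hb_def
  have ha : 0 < a := div_pos (by linarith) hd2
  have hab : a + 1 ≤ b := by
    rw [ha_def, hb_def, div_add_one hd2.ne']
    exact div_le_div_of_nonneg_right (by linarith) hd2.le
  have hp : ∀ k : ℕ,
      ((d : ℝ) - 1) / ((d - 2) * k + 2 * d - 1) *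
        ∏ j ∈ range k, (((d : ℝ) - 2) * j + d) / ((d - 2) * j + 2 * d - 1)
      = (1 + 1 / ((d : ℝ) - 2)) / (k + b) * ∏ j ∈ range k, ((j : ℝ) + a) / (j + b) := by
    intro k
    congr 1
    · rw [hb_def]; field_simp; ring
    · refine prod_congr rfl fun j _ => ?_
      rw [ha_def, hb_def]; field_simp; ring
  have hexp : -1 + (a - b) = -(2 * (d : ℝ) - 3) / (d - 2) := by
    rw [ha_def, hb_def]; field_simp; ring
  refine ⟨fun k => by rw [hp, div_add_mul_prod_eq_Gamma ha (by linarith)], ?_⟩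
  simpa only [IsOfOrderRpow, hp, hexp] using
    (isOfOrderRpow_div_add (by positivity) (by linarith)).mul (isOfOrderRpow_prod ha hab)
end

section
/- Fix an integer k ≥ 0. For α_0, ..., α_k ≥ 0 and 0 ≤ η ≤ 1/2, define Γ_n(α_0,...,α_k,η) = (1/n) ∑ over integer tuples ηn < i_0 < i_1 < ... < i_k ≤ n of ∏_{ℓ=0}^{k-1} ( (i_ℓ/i_{ℓ+1})^{α_ℓ} / (i_{ℓ+1} − 1) ) · (i_k/n)^{α_k}. Then, as n → ∞, Γ_n(α_0,...,α_k,0) converges to ∏_{ℓ=0}^{k} 1/(α_ℓ + 1). -/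
/-!
Splitting off the largest index `j = i_k` writes `n Γ_n` as `∑_{j ≤ n} (j/n)^{α_k} h(j)`, where
`h(j)` is the analogous sum of length `k` at level `j - 1`, normalized by `j - 1`. By induction
`h(j) → ∏_{ℓ < k} 1/(α_ℓ + 1)`, and since the weights `(j/n)^{α_k} ≤ 1` form a Riemann sum of
`∫₀¹ x^{α_k} dx = 1/(α_k + 1)`, a Cesàro argument gives `Γ_n → ∏_{ℓ ≤ k} 1/(α_ℓ + 1)`.
-/

open Finset Filter Topology

lemma sum_Icc_one_eq_sum_range {M : Type*} [AddCommMonoid M] (f : ℕ → M) (n : ℕ) :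
    ∑ j ∈ Icc 1 n, f j = ∑ i ∈ range n, f (i + 1) := by
  rw [← Ico_add_one_right_eq_Icc, sum_Ico_eq_sum_range]
  simp [add_comm]

lemma Filter.Tendsto.cesaro_Icc {u : ℕ → ℝ} {l : ℝ} (h : Tendsto u atTop (𝓝 l)) :
    Tendsto (fun n : ℕ => (1 / (n : ℝ)) * ∑ j ∈ Icc 1 n, u j) atTop (𝓝 l) := by
  simpa [sum_Icc_one_eq_sum_range] using (h.comp (tendsto_add_atTop_nat 1)).cesaro

section RiemannSum

variable {α : ℝ}

lemma integral_zero_natCast_rpow (hα : 0 ≤ α) (n : ℕ) :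
    ∫ x in (0 : ℝ)..n, x ^ α = (n : ℝ) ^ (α + 1) / (α + 1) := by
  rw [integral_rpow (Or.inl (by linarith)), Real.zero_rpow (by linarith), sub_zero]

lemma monotoneOn_rpow_Icc (hα : 0 ≤ α) (n : ℕ) :
    MonotoneOn (fun x : ℝ => x ^ α) (Set.Icc 0 (0 + n)) :=
  fun _ hx _ _ hxy => Real.rpow_le_rpow hx.1 hxy hα

lemma natCast_rpow_div_le_sum_Icc (hα : 0 ≤ α) (n : ℕ) :
    (n : ℝ) ^ (α + 1) / (α + 1) ≤ ∑ j ∈ Icc 1 n, (j : ℝ) ^ α := by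
  simpa [sum_Icc_one_eq_sum_range, integral_zero_natCast_rpow hα] using
    (monotoneOn_rpow_Icc hα n).integral_le_sum

lemma sum_Icc_le_natCast_rpow_div (hα : 0 ≤ α) (n : ℕ) :
    ∑ j ∈ Icc 1 n, (j : ℝ) ^ α ≤ (n : ℝ) ^ (α + 1) / (α + 1) + (n : ℝ) ^ α := by
  have hlower : ∑ i ∈ range n, (i : ℝ) ^ α ≤ (n : ℝ) ^ (α + 1) / (α + 1) := by
    simpa [integral_zero_natCast_rpow hα] using (monotoneOn_rpow_Icc hα n).sum_le_integral
  have htel := sum_range_sub (fun i : ℕ => (i : ℝ) ^ α) n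
  rw [sum_sub_distrib] at htel
  have h0 : (0 : ℝ) ≤ (0 : ℝ) ^ α := Real.rpow_nonneg le_rfl α
  simp only [sum_Icc_one_eq_sum_range, Nat.cast_add, Nat.cast_one, Nat.cast_zero] at htel ⊢
  linarith

theorem tendsto_riemannSum_rpow (hα : 0 ≤ α) :
    Tendsto (fun n : ℕ => (1 / (n : ℝ)) * ∑ j ∈ Icc 1 n, ((j : ℝ) / n) ^ α) atTop
      (𝓝 (1 / (α + 1))) := by
  have hnormalize : ∀ n : ℕ, 0 < n → (1 / (n : ℝ)) * ∑ j ∈ Icc 1 n, ((j : ℝ) / n) ^ α =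
      (∑ j ∈ Icc 1 n, (j : ℝ) ^ α) / (n : ℝ) ^ (α + 1) := fun n hn => by
    have hn' : (0 : ℝ) < n := Nat.cast_pos.mpr hn
    simp only [mul_sum, sum_div, Real.div_rpow (Nat.cast_nonneg _) hn'.le,
      Real.rpow_add_one hn'.ne']
    exact sum_congr rfl fun j _ => by field_simp
  have hupper : Tendsto (fun n : ℕ => 1 / (α + 1) + 1 / (n : ℝ)) atTop (𝓝 (1 / (α + 1))) := by
    simpa using (tendsto_const_nhds (x := 1 / (α + 1))).add tendsto_one_div_atTop_nhds_zero_nat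
  refine tendsto_of_tendsto_of_tendsto_of_le_of_le' tendsto_const_nhds hupper ?_ ?_ <;>
    filter_upwards [eventually_gt_atTop 0] with n hn <;>
    rw [hnormalize n hn]
  · rw [le_div_iff₀ (by positivity), one_div_mul_eq_div]
    exact natCast_rpow_div_le_sum_Icc hα n
  · have hn' : (0 : ℝ) < n := Nat.cast_pos.mpr hn
    have hscale : (1 / (n : ℝ)) * (n : ℝ) ^ (α + 1) = (n : ℝ) ^ α := by
      rw [Real.rpow_add_one hn'.ne']; field_simp
    rw [div_le_iff₀ (by positivity), add_mul, one_div_mul_eq_div, hscale]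
    exact sum_Icc_le_natCast_rpow_div hα n

lemma tendsto_weighted_cesaro_zero (hα : 0 ≤ α) {h : ℕ → ℝ} (hh : Tendsto h atTop (𝓝 0)) :
    Tendsto (fun n : ℕ => (1 / (n : ℝ)) * ∑ j ∈ Icc 1 n, ((j : ℝ) / n) ^ α * h j) atTop
      (𝓝 0) := by
  have hbound : Tendsto (fun n : ℕ => (1 / (n : ℝ)) * ∑ j ∈ Icc 1 n, ‖h j‖) atTop (𝓝 0) := by
    simpa using hh.norm.cesaro_Icc
  refine squeeze_zero_norm' ?_ hbound
  filter_upwards [eventually_gt_atTop 0] with n hn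
  have hweight : ∀ j ∈ Icc 1 n, ‖((j : ℝ) / n) ^ α‖ ≤ 1 := fun j hj => by
    rw [Real.norm_of_nonneg (by positivity)]
    refine Real.rpow_le_one (by positivity) ?_ hα
    exact div_le_one_of_le₀ (by exact_mod_cast (mem_Icc.mp hj).2) (Nat.cast_nonneg n)
  rw [norm_mul, Real.norm_of_nonneg (by positivity)]
  gcongr
  refine (norm_sum_le (Icc 1 n) _).trans (sum_le_sum fun j hj => ?_)
  rw [norm_mul]
  exact mul_le_of_le_one_left (norm_nonneg _) (hweight j hj)

theorem tendsto_weighted_cesaro (hα : 0 ≤ α) {h : ℕ → ℝ} {c : ℝ} (hh : Tendsto h atTop (𝓝 c)) :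
    Tendsto (fun n : ℕ => (1 / (n : ℝ)) * ∑ j ∈ Icc 1 n, ((j : ℝ) / n) ^ α * h j) atTop
      (𝓝 (c / (α + 1))) := by
  have herr := tendsto_weighted_cesaro_zero hα (h := fun j => h j - c)
    (by simpa using hh.sub_const c)
  have hsplit : ∀ n : ℕ, (1 / (n : ℝ)) * ∑ j ∈ Icc 1 n, ((j : ℝ) / n) ^ α * h j =
      c * ((1 / (n : ℝ)) * ∑ j ∈ Icc 1 n, ((j : ℝ) / n) ^ α) +
        (1 / (n : ℝ)) * ∑ j ∈ Icc 1 n, ((j : ℝ) / n) ^ α * (h j - c) := fun n => by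
    simp only [mul_sum, ← sum_add_distrib]
    exact sum_congr rfl fun j _ => by ring
  rw [funext hsplit, div_eq_mul_one_div c, ← add_zero (c * _)]
  exact ((tendsto_riemannSum_rpow hα).const_mul c).add herr

end RiemannSum

lemma Fin.strictMono_snoc_iff {α : Type*} [Preorder α] {n : ℕ} {p : Fin n → α} {x : α} :
    StrictMono (Fin.snoc p x : Fin (n + 1) → α) ↔ StrictMono p ∧ ∀ a, p a < x := by
  refine ⟨fun h => ⟨fun a b hab => ?_, fun a => ?_⟩, fun ⟨hp, hx⟩ a b hab => ?_⟩
  · simpa using h (Fin.castSucc_lt_castSucc_iff.mpr hab)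
  · simpa using h (Fin.castSucc_lt_last a)
  · induction b using Fin.lastCases with
    | last =>
      obtain ⟨a, rfl⟩ := Fin.exists_castSucc_eq.mpr (Fin.ne_last_of_lt hab)
      simpa using hx a
    | cast b =>
      obtain ⟨a, rfl⟩ := Fin.exists_castSucc_eq.mpr
        (Fin.ne_last_of_lt (hab.trans (Fin.castSucc_lt_last b)))
      simpa using hp (Fin.castSucc_lt_castSucc_iff.mp hab)

def incTuples (n m : ℕ) : Finset (Fin n → ℕ) :=
  (Fintype.piFinset fun _ : Fin n => Icc 1 m).filter fun i => ∀ a b : Fin n, a < b → i a < i b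

lemma mem_incTuples {n m : ℕ} {i : Fin n → ℕ} :
    i ∈ incTuples n m ↔ (∀ a, i a ∈ Icc 1 m) ∧ StrictMono i := by
  rw [incTuples, mem_filter, Fintype.mem_piFinset]
  rfl

lemma snoc_mem_incTuples {n m j : ℕ} {p : Fin n → ℕ} :
    (Fin.snoc p j : Fin (n + 1) → ℕ) ∈ incTuples (n + 1) m ↔
      j ∈ Icc 1 m ∧ p ∈ incTuples n (j - 1) := by
  simp only [mem_incTuples, Fin.strictMono_snoc_iff, Fin.forall_fin_succ', Fin.snoc_castSucc,
    Fin.snoc_last, mem_Icc]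
  constructor
  · rintro ⟨⟨hp, hj⟩, hmono, hlt⟩
    exact ⟨hj, fun a => ⟨(hp a).1, by have := hlt a; omega⟩, hmono⟩
  · rintro ⟨hj, hp, hmono⟩
    exact ⟨⟨fun a => ⟨(hp a).1, by have := hp a; omega⟩, hj⟩, hmono,
      fun a => by have := hp a; omega⟩

lemma sum_incTuples_succ {M : Type*} [AddCommMonoid M] (n m : ℕ) (f : (Fin (n + 1) → ℕ) → M) :
    ∑ i ∈ incTuples (n + 1) m, f i =
      ∑ j ∈ Icc 1 m, ∑ p ∈ incTuples n (j - 1), f (Fin.snoc p j) := by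
  rw [sum_sigma']
  refine sum_nbij' (fun i => ⟨i (Fin.last n), Fin.init i⟩) (fun q => Fin.snoc q.2 q.1)
    (fun i hi => ?_) (fun q hq => ?_) (fun i _ => Fin.snoc_init_self i)
    (fun q _ => by simp) (fun i _ => by simp)
  · rw [← Fin.snoc_init_self i, snoc_mem_incTuples] at hi
    simpa using hi
  · exact snoc_mem_incTuples.mpr (by simpa using hq)

/-- `Γ_n(α, 0) = gammaSum k α n n / n`. -/
noncomputable def gammaSum (k : ℕ) (α : Fin (k + 1) → ℝ) (m n : ℕ) : ℝ :=
  ∑ i ∈ incTuples (k + 1) m,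
    (∏ ℓ : Fin k, (((i ℓ.castSucc : ℝ) / (i ℓ.succ : ℝ)) ^ α ℓ.castSucc *
      (1 / ((i ℓ.succ : ℝ) - 1)))) * ((i (Fin.last k) : ℝ) / (n : ℝ)) ^ α (Fin.last k)

lemma gammaSum_zero (α : Fin 1 → ℝ) (m n : ℕ) :
    gammaSum 0 α m n = ∑ j ∈ Icc 1 m, ((j : ℝ) / n) ^ α 0 := by
  rw [gammaSum, sum_incTuples_succ]
  refine sum_congr rfl fun j _ => ?_
  have : incTuples 0 (j - 1) = univ := by
    simp [incTuples, Fintype.piFinset_of_isEmpty]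
  simp [this, Fin.snoc]

lemma gammaSum_succ (k : ℕ) (α : Fin (k + 2) → ℝ) (m n : ℕ) :
    gammaSum (k + 1) α m n = ∑ j ∈ Icc 1 m, ((j : ℝ) / n) ^ α (Fin.last (k + 1)) *
      (1 / ((j : ℝ) - 1) * gammaSum k (fun ℓ => α ℓ.castSucc) (j - 1) j) := by
  rw [gammaSum, sum_incTuples_succ]
  refine sum_congr rfl fun j _ => ?_
  rw [gammaSum, mul_sum, mul_sum]
  refine sum_congr rfl fun p _ => ?_
  simp only [Fin.prod_univ_castSucc, Fin.snoc_castSucc, Fin.succ_castSucc, Fin.succ_last,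
    Fin.snoc_last]
  ring

lemma gammaSum_eq_rpow_mul (k : ℕ) (α : Fin (k + 1) → ℝ) {m : ℕ} (hm : m ≠ 0) (n : ℕ) :
    gammaSum k α m n = ((m : ℝ) / n) ^ α (Fin.last k) * gammaSum k α m m := by
  rw [gammaSum, gammaSum, mul_sum]
  refine sum_congr rfl fun i _ => ?_
  have hdiv : ((i (Fin.last k) : ℝ) / n) = (m : ℝ) / n * ((i (Fin.last k) : ℝ) / m) := by
    rw [div_mul_div_comm, mul_comm (m : ℝ), mul_div_mul_right _ _ (Nat.cast_ne_zero.mpr hm)]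
  rw [hdiv, Real.mul_rpow (by positivity) (by positivity)]
  ring

lemma tendsto_gammaSum_pred {k : ℕ} {α : Fin (k + 1) → ℝ} {c : ℝ}
    (h : Tendsto (fun n : ℕ => (1 / (n : ℝ)) * gammaSum k α n n) atTop (𝓝 c)) :
    Tendsto (fun j : ℕ => 1 / ((j : ℝ) - 1) * gammaSum k α (j - 1) j) atTop (𝓝 c) := by
  rw [← tendsto_add_atTop_iff_nat 1]
  have hratio : Tendsto (fun m : ℕ => ((m : ℝ) / (m + 1)) ^ α (Fin.last k)) atTop (𝓝 1) := by
    simpa using (tendsto_natCast_div_add_atTop (1 : ℝ)).rpow_const (Or.inl one_ne_zero)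
  refine (one_mul c ▸ hratio.mul h).congr' ?_
  filter_upwards [eventually_ne_atTop 0] with m hm
  rw [Nat.add_sub_cancel, gammaSum_eq_rpow_mul k α hm (m + 1)]
  push_cast
  ring

theorem tendsto_gammaSum (k : ℕ) (α : Fin (k + 1) → ℝ) (hα : ∀ j, 0 ≤ α j) :
    Tendsto (fun n : ℕ => (1 / (n : ℝ)) * gammaSum k α n n) atTop
      (𝓝 (∏ j, 1 / (α j + 1))) := by
  induction k with
  | zero => simpa [gammaSum_zero] using tendsto_riemannSum_rpow (hα 0)
  | succ k ih =>
    have hinner := tendsto_gammaSum_pred (ih (fun ℓ => α ℓ.castSucc) fun ℓ => hα _)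
    rw [Fin.prod_univ_castSucc, ← div_eq_mul_one_div]
    simpa only [gammaSum_succ] using tendsto_weighted_cesaro (hα _) hinner

/-- The `η = 0` convergence statement of Lemma 4.4: for fixed exponents `α_ℓ ≥ 0`,
`Γ_n(α_0,…,α_k,0) = (1/n) ∑_{0 < i_0 < … < i_k ≤ n}
∏_{ℓ<k} (i_ℓ/i_{ℓ+1})^{α_ℓ}/(i_{ℓ+1}-1) · (i_k/n)^{α_k}` converges to
`∏_ℓ 1/(α_ℓ+1)` as `n → ∞`. -/
theorem gamma_sum_tendsto (k : ℕ) (α : Fin (k + 1) → ℝ) (hα : ∀ j, 0 ≤ α j) :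
    Tendsto
      (fun n : ℕ =>
        (1 / (n : ℝ)) *
          ∑ i ∈ (Fintype.piFinset fun _ : Fin (k + 1) => Finset.Icc 1 n).filter
              (fun i : Fin (k + 1) → ℕ => ∀ a b : Fin (k + 1), a < b → i a < i b),
            (∏ ℓ : Fin k,
              (((i ℓ.castSucc : ℝ) / (i ℓ.succ : ℝ)) ^ α ℓ.castSucc *
                (1 / ((i ℓ.succ : ℝ) - 1)))) *
              ((i (Fin.last k) : ℝ) / (n : ℝ)) ^ α (Fin.last k))
      atTop (nhds (∏ j : Fin (k + 1), 1 / (α j + 1))) :=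
  tendsto_gammaSum k α hα
end
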